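/- arXiv:1203.0334 — 4 statements merged into one kernel-verified Lean document; each statement's English description precedes it below -/
import Mathlib

section
/- If an alphabet A contains at least three letters, then the set of square-free words over A is infinite. -/
/-!
The Thue–Morse sequence `t` (parity of the binary digit sum) is overlap-free. An overlap of even
period descends to one of half the period via `t (2m) = t m`, `t (2m+1) = !t m`; an overlap of odd
period `ℓ` would make `t` alternate across it (as `t (2m) ≠ t (2m+1)` and `n`, `n + ℓ` have
opposite parity), and then `t i ≠ t (i + ℓ)`. The first differences of `t` form a square-free word
over three letters: if two adjacent blocks of differences agree, the corresponding blocks of `t`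
either agree, giving an overlap, or are complementary, which forces all differences in them to
vanish and hence the blocks to agree after all.
-/

namespace SqFreePaper

variable {A : Type*}

/-- A word is square-free if it contains no nonempty factor of the form `s ++ s`. -/
def IsSquareFreeWord (w : List A) : Prop :=
  ∀ u s v : List A, w = u ++ s ++ s ++ v → s = []

/-- One-step rewriting relation associated with a system of defining relations `π`. -/
def OneStep (π : List A → List A → Prop) (x y : List A) : Prop :=
  ∃ r s u v : List A, x = r ++ u ++ s ∧ y = r ++ v ++ s ∧ (π u v ∨ π v u)

/-- The congruence `=_π` generated by `π`: reflexive-transitive closure of one-step rewriting. -/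
def EqRel (π : List A → List A → Prop) : List A → List A → Prop :=
  Relation.ReflTransGen (OneStep π)

/-- `w` is square-free relative to `π`: every word in its `=_π`-class is square-free. -/
def SFRel (π : List A → List A → Prop) (w : List A) : Prop :=
  ∀ z, EqRel π w z → IsSquareFreeWord z

/-- Union of two systems of defining relations. -/
def PiRel (σ ρ : List A → List A → Prop) (x y : List A) : Prop := σ x y ∨ ρ x y

/-- The set of defining words of a system `σ`. -/
def DWords (σ : List A → List A → Prop) : Set (List A) :=
  {x | ∃ y, σ x y ∨ σ y x}

/-- The closure of `D_σ` under the congruence `=_ρ`. -/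
def ClosureD (σ ρ : List A → List A → Prop) : Set (List A) :=
  {x | ∃ w ∈ DWords σ, EqRel ρ w x}

/-- The system `{(u_i, u_j) : i < j}` determined by a finite family of words. -/
def FamilyRel {n : ℕ} (u : Fin n → List A) (x y : List A) : Prop :=
  ∃ i j : Fin n, i < j ∧ x = u i ∧ y = u j

/-- `x ~ y` iff both lie in `D̄_σ` or both lie in `D̄_ρ`. -/
def Sim (σ ρ : List A → List A → Prop) (x y : List A) : Prop :=
  (x ∈ ClosureD σ ρ ∧ y ∈ ClosureD σ ρ) ∨ (x ∈ ClosureD ρ σ ∧ y ∈ ClosureD ρ σ)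

/-- `D_τ = D̄_σ ∪ D̄_ρ`. -/
def DTau (σ ρ : List A → List A → Prop) : Set (List A) :=
  ClosureD σ ρ ∪ ClosureD ρ σ

/-- The concatenation `x_a ++ x_{a+1} ++ ⋯ ++ x_{a+len-1}`. -/
def wordSeg (x : ℕ → List A) (a len : ℕ) : List A :=
  ((List.range' a len).map x).flatten

/-- Standing hypotheses of the paper: `D̄_σ`, `D̄_ρ` are finite, nonempty, disjoint,
and closed under `=_σ`, `=_ρ` respectively. -/
def SettingHyps (σ ρ : List A → List A → Prop) : Prop :=
  (ClosureD σ ρ).Finite ∧ (ClosureD ρ σ).Finite ∧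
  (ClosureD σ ρ).Nonempty ∧ (ClosureD ρ σ).Nonempty ∧
  (ClosureD σ ρ ∩ ClosureD ρ σ = ∅) ∧
  (∀ x ∈ ClosureD σ ρ, ∀ y, EqRel σ x y → y ∈ ClosureD σ ρ) ∧
  (∀ x ∈ ClosureD ρ σ, ∀ y, EqRel ρ x y → y ∈ ClosureD ρ σ)

/-- `x_1, …, x_n` (with complementary members `p_i`, `q_i`) is a linear decomposition. -/
def IsLinDecomp (σ ρ : List A → List A → Prop) (n : ℕ) (x p q : ℕ → List A) : Prop :=
  1 ≤ n ∧
  (∀ i, 1 ≤ i → i ≤ n → x i ≠ []) ∧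
  (∃ u v : ℕ → List A,
    (∀ i, 1 < i → i ≤ n → Sim σ ρ (p i ++ x i ++ q i) (q (i-1) ++ u i)) ∧
    (∀ i, 1 ≤ i → i < n → Sim σ ρ (p i ++ x i ++ q i) (v i ++ p (i+1)))) ∧
  (∀ i, 1 ≤ i → i < n → q i = [] ∨ p (i+1) = []) ∧
  p 1 = [] ∧ q n = [] ∧ (n = 1 → x 1 ∈ DTau σ ρ)

/-- `Lin(n)`: words with a linear decomposition of at most `n` members. -/
def LinSet (σ ρ : List A → List A → Prop) (n : ℕ) : Set (List A) :=
  {w | ∃ m, 1 ≤ m ∧ m ≤ n ∧ ∃ x p q, IsLinDecomp σ ρ m x p q ∧ w = wordSeg x 1 m}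

/-- `Lin = ⋃ₙ Lin(n)`: linearly decomposable words. -/
def LinAll (σ ρ : List A → List A → Prop) : Set (List A) :=
  {w | ∃ n, w ∈ LinSet σ ρ n}

/-- Occurrence `(r, d, s)` contains occurrence `(p, e, q)` (of the same word)
iff `|r| ≤ |p|` and `|s| ≤ |q|`. -/
def Contained (p q r s : List A) : Prop := r.length ≤ p.length ∧ s.length ≤ q.length

/-- Two occurrences in `w` overlap iff some occurrence of a nonempty word is
contained in both. -/
def Overlap (w p q r s : List A) : Prop :=
  ∃ a f b : List A, f ≠ [] ∧ w = a ++ f ++ b ∧ Contained a b p q ∧ Contained a b r s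

/-- `(p, e, q)` is a maximal occurrence in `w` of a word `e` in the set `L`. -/
def MaximalOcc (L : Set (List A)) (w p e q : List A) : Prop :=
  w = p ++ e ++ q ∧ e ∈ L ∧
  ∀ r d s, w = r ++ d ++ s → d ∈ L → Contained p q r s → r = p ∧ d = e ∧ s = q

def thueMorse (n : ℕ) : Bool := (Nat.digits 2 n).sum.bodd

lemma thueMorse_two_mul (m : ℕ) : thueMorse (2 * m) = thueMorse m := by
  rcases Nat.eq_zero_or_pos m with rfl | hm
  · rfl
  · simp [thueMorse, Nat.digits_def' one_lt_two (by omega : 0 < 2 * m)]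

lemma thueMorse_two_mul_add_one (m : ℕ) : thueMorse (2 * m + 1) = !thueMorse m := by
  simp [thueMorse, Nat.bodd_add, show (2 * m + 1) / 2 = m by omega]

lemma thueMorse_ne_succ_of_even {n : ℕ} (hn : Even n) : thueMorse n ≠ thueMorse (n + 1) := by
  obtain ⟨m, rfl⟩ := hn
  rw [← two_mul, thueMorse_two_mul, thueMorse_two_mul_add_one]
  exact (Bool.not_ne_self _).symm

/-- The factor `x i ⋯ x (i + 2ℓ)` is an overlap `awawa` with `|aw| = ℓ`. -/
def HasOverlapAt {α : Type*} (x : ℕ → α) (i ℓ : ℕ) : Prop :=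
  ∀ n, i ≤ n → n ≤ i + ℓ → x n = x (n + ℓ)

def HasSquareAt {α : Type*} (x : ℕ → α) (i ℓ : ℕ) : Prop :=
  ∀ n, i ≤ n → n < i + ℓ → x n = x (n + ℓ)

lemma eq_iff_even_of_forall_ne_succ {b : ℕ → Bool} {ℓ : ℕ} (h : ∀ k < ℓ, b k ≠ b (k + 1)) :
    b ℓ = b 0 ↔ Even ℓ := by
  induction ℓ with
  | zero => simp
  | succ ℓ ih =>
    rw [Bool.eq_not_of_ne (h ℓ ℓ.lt_succ_self).symm, Nat.even_add_one,
      ← ih fun k hk => h k (by omega)]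
    cases b ℓ <;> cases b 0 <;> decide

lemma not_hasOverlapAt_thueMorse_of_odd {i ℓ : ℕ} (hℓ : Odd ℓ) :
    ¬ HasOverlapAt thueMorse i ℓ := by
  intro H
  have alternating : ∀ k < ℓ, thueMorse (i + k) ≠ thueMorse (i + k + 1) := by
    intro k hk
    rcases Nat.even_or_odd (i + k) with heven | hodd
    · exact thueMorse_ne_succ_of_even heven
    · rw [H (i + k) (by omega) (by omega), H (i + k + 1) (by omega) (by omega),
        show i + k + 1 + ℓ = i + k + ℓ + 1 by omega]
      exact thueMorse_ne_succ_of_even (hodd.add_odd hℓ)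
  have hperiod := eq_iff_even_of_forall_ne_succ (b := fun k => thueMorse (i + k)) alternating
  simp only [add_zero] at hperiod
  exact Nat.not_even_iff_odd.mpr hℓ (hperiod.mp (H i le_rfl (by omega)).symm)

lemma exists_hasOverlapAt_thueMorse_of_two_mul {i ℓ : ℕ}
    (H : HasOverlapAt thueMorse i (2 * ℓ)) : ∃ j, HasOverlapAt thueMorse j ℓ := by
  obtain ⟨j, rfl | rfl⟩ := Nat.even_or_odd' i
  · refine ⟨j, fun n h1 h2 => ?_⟩
    simpa [← mul_add, thueMorse_two_mul] using H (2 * n) (by omega) (by omega)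
  · refine ⟨j, fun n h1 h2 => ?_⟩
    have := H (2 * n + 1) (by omega) (by omega)
    rwa [show 2 * n + 1 + 2 * ℓ = 2 * (n + ℓ) + 1 by ring, thueMorse_two_mul_add_one,
      thueMorse_two_mul_add_one, Bool.not_inj_iff] at this

theorem thueMorse_not_hasOverlapAt {ℓ : ℕ} (hℓ : 0 < ℓ) (i : ℕ) :
    ¬ HasOverlapAt thueMorse i ℓ := by
  induction ℓ using Nat.strong_induction_on generalizing i with
  | _ ℓ ih =>
  obtain ⟨m, rfl | rfl⟩ := Nat.even_or_odd' ℓ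
  · intro H
    obtain ⟨j, hj⟩ := exists_hasOverlapAt_thueMorse_of_two_mul H
    exact ih m (by omega) (by omega) j hj
  · exact not_hasOverlapAt_thueMorse_of_odd (odd_two_mul_add_one m)

/-- Encodes `thueMorse (n + 1) - thueMorse n + 1`. -/
def thueMorseDiff (n : ℕ) : Fin 3 :=
  if thueMorse n = thueMorse (n + 1) then 1 else if thueMorse (n + 1) then 2 else 0

lemma thueMorse_succ_eq_iff_of_thueMorseDiff_eq {x y : ℕ}
    (h : thueMorseDiff x = thueMorseDiff y) :
    thueMorse (x + 1) = thueMorse (y + 1) ↔ thueMorse x = thueMorse y := by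
  revert h
  unfold thueMorseDiff
  cases thueMorse x <;> cases thueMorse (x + 1) <;> cases thueMorse y <;>
    cases thueMorse (y + 1) <;> decide

lemma thueMorse_eq_succ_of_thueMorseDiff_eq {x y : ℕ} (h : thueMorseDiff x = thueMorseDiff y)
    (hne : thueMorse x ≠ thueMorse y) : thueMorse x = thueMorse (x + 1) := by
  revert h hne
  unfold thueMorseDiff
  cases thueMorse x <;> cases thueMorse (x + 1) <;> cases thueMorse y <;>
    cases thueMorse (y + 1) <;> decide

theorem thueMorseDiff_not_hasSquareAt {ℓ : ℕ} (hℓ : 0 < ℓ) (i : ℕ) :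
    ¬ HasSquareAt thueMorseDiff i ℓ := by
  intro H
  have propagate : ∀ n, i ≤ n → n ≤ i + ℓ →
      (thueMorse n = thueMorse (n + ℓ) ↔ thueMorse i = thueMorse (i + ℓ)) := by
    intro n hin hn
    induction n, hin using Nat.le_induction with
    | base => rfl
    | succ n hin ih =>
      rw [← ih (by omega), show n + 1 + ℓ = n + ℓ + 1 by omega]
      exact thueMorse_succ_eq_iff_of_thueMorseDiff_eq (H n hin (by omega))
  by_cases h0 : thueMorse i = thueMorse (i + ℓ)
  · exact thueMorse_not_hasOverlapAt hℓ i fun n h1 h2 => (propagate n h1 h2).mpr h0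
  · have constant : ∀ k ≤ ℓ, thueMorse (i + k) = thueMorse i := by
      intro k hk
      induction k with
      | zero => rfl
      | succ k ih =>
        rw [← ih (by omega), ← add_assoc]
        exact (thueMorse_eq_succ_of_thueMorseDiff_eq (H (i + k) (by omega) (by omega))
          (mt (propagate (i + k) (by omega) (by omega)).mp h0)).symm
    exact h0 (constant ℓ le_rfl).symm

lemma isSquareFreeWord_map_range {α : Type*} {x : ℕ → α}
    (hx : ∀ i ℓ, 0 < ℓ → ¬ HasSquareAt x i ℓ) (N : ℕ) :
    IsSquareFreeWord ((List.range N).map x) := by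
  intro u s v hw
  by_contra hs
  have hlen : u.length + s.length + s.length ≤ N := by
    have := congrArg List.length hw
    simp only [List.length_map, List.length_range, List.length_append] at this
    omega
  have hget : ∀ j < N, (u ++ s ++ s ++ v)[j]? = some (x j) := fun j hj => by
    rw [← hw]
    simp [hj]
  refine hx u.length s.length (List.length_pos_iff.mpr hs) fun n h1 h2 => ?_
  obtain ⟨k, rfl⟩ := Nat.exists_eq_add_of_le h1
  have hk : k < s.length := by omega
  have first := hget (u.length + k) (by omega)
  have second := hget (u.length + k + s.length) (by omega)
  rw [List.append_assoc, List.append_assoc, List.getElem?_append_right (by omega),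
    Nat.add_sub_cancel_left, List.getElem?_append_left hk] at first
  rw [List.append_assoc, List.getElem?_append_right (by simp only [List.length_append]; omega),
    List.length_append, show u.length + k + s.length - (u.length + s.length) = k by omega,
    List.getElem?_append_left hk] at second
  exact Option.some.inj (first.symm.trans second)

/-- If an alphabet `A` contains at least three letters,
then the set of square-free words over `A` is infinite. -/
theorem squarefree_infinite_of_three_letters {A : Type*}
    (h : ∃ f : Fin 3 → A, Function.Injective f) :
    {w : List A | IsSquareFreeWord w}.Infinite := by
  obtain ⟨f, hf⟩ := h
  have hsquare : ∀ i ℓ, 0 < ℓ → ¬ HasSquareAt (f ∘ thueMorseDiff) i ℓ :=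
    fun i ℓ hℓ H => thueMorseDiff_not_hasSquareAt hℓ i fun n h1 h2 => hf (H n h1 h2)
  exact Set.infinite_of_injective_forall_mem
    (f := fun N => (List.range N).map (f ∘ thueMorseDiff))
    (fun N M hNM => by simpa using congrArg List.length hNM)
    (isSquareFreeWord_map_range hsquare)

end SqFreePaper
end

section
/- Let π be a system of defining relations on A* (an irreflexive binary relation on A*), and let P ⊆ A* be a decidable (recursive) set of words. If every word w whose equivalence class [w]_π (under the congruence generated by π) is contained in P has a finite equivalence class [w]_π, then the set P(A,π) = { w ∈ A* : [w]_π ⊆ P } is decidable, provided π itself is decidable and finitely branching in the sense that the one-step rewriting relation from any word yields a computable finite set. -/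
namespace SqFreePaper

variable {A : Type*}

/-
Breadth-first search from `w` enumerates the class `[w]_π`. Finding a word outside `P` certifies
`w ∉ P(A, π)`, so the complement is semi-decidable. If `w ∈ P(A, π)` the class is finite, so some
search stage adds no new word; a stage closed in this way whose words all lie in `P` certifies
`w ∈ P(A, π)`. Post's theorem combines the two semi-decision procedures.
-/

section Computability

variable {α β σ : Type*} [Primcodable α] [Primcodable β] [Primcodable σ]

theorem _root_.Computable.list_map {f : α → List β} {g : α → β → σ} (hf : Computable f)
    (hg : Computable₂ g) : Computable fun a => (f a).map (g a) := by
  have hextend : Computable₂ fun (a : α) (p : ℕ × List σ) =>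
      p.2 ++ (((f a)[p.1]?).map (g a)).toList :=
    (Computable.list_append.comp (Computable.snd.comp Computable.snd)
      (Primrec.optionToList.to_comp.comp
        (Computable.option_map (Computable.list_getElem?.comp (hf.comp Computable.fst)
          (Computable.fst.comp Computable.snd)) (hg.comp (Computable.fst.comp Computable.fst)
            Computable.snd).to₂))).to₂
  refine (Computable.nat_rec (Computable.list_length.comp hf) (Computable.const []) hextend).of_eq
    fun a => ?_
  suffices ∀ n, Nat.rec (motive := fun _ => List σ) []
      (fun k l => l ++ (((f a)[k]?).map (g a)).toList) n = ((f a).take n).map (g a) by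
    simp [this]
  intro n
  induction n with
  | zero => rfl
  | succ n ih => cases h : (f a)[n]? <;> simp [ih, List.take_add_one, h]

theorem _root_.ComputablePred.comp {p : β → Prop} {f : α → β} (hp : ComputablePred p)
    (hf : Computable f) : ComputablePred fun a => p (f a) := by
  classical exact (hp.decide.comp hf).computablePred

protected theorem _root_.ComputablePred.and {p q : α → Prop} (hp : ComputablePred p)
    (hq : ComputablePred q) : ComputablePred fun a => p a ∧ q a := by
  classical
  exact ((Primrec.and.to_comp.comp hp.decide hq.decide).of_eq fun a => by simp).computablePred

theorem _root_.ComputablePred.forall_mem_list {p : β → Prop} (hp : ComputablePred p) :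
    ComputablePred fun l : List β => ∀ b ∈ l, p b := by
  classical
  have hall : PrimrecPred fun l : List Bool => ∀ b ∈ l, b = true :=
    PrimrecPred.forall_mem_list (Primrec.eq.comp Primrec.id (Primrec.const true))
  exact (hall.computablePred.comp (Computable.list_map Computable.id
    (hp.decide.comp Computable.snd).to₂)).of_eq fun l => by simp

theorem _root_.ComputablePred.list_subset :
    ComputablePred fun p : List β × List β => p.1 ⊆ p.2 := by
  classical
  have hmem : PrimrecRel fun (b : β) (l : List β) => ∃ c ∈ l, c = b :=
    (PrimrecRel.exists_mem_list Primrec.eq).swap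
  exact (PrimrecRel.forall_mem_list hmem).computablePred.of_eq fun p => by
    simp [List.subset_def]

theorem _root_.REPred.exists_nat {q : α × ℕ → Prop} (hq : ComputablePred q) :
    REPred fun a => ∃ n, q (a, n) := by
  classical
  have hsearch : Partrec fun a => Nat.rfind (PFun.lift fun n => decide (q (a, n))) :=
    Partrec.rfind hq.decide.partrec
  exact hsearch.dom_re.of_eq fun a => by simp [PFun.lift]

end Computability

section Reach

variable {α : Type*} (next : α → List α)

def reachWithin (a : α) : ℕ → List α
  | 0 => [a]
  | n + 1 => reachWithin a n ++ (reachWithin a n).flatMap next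

variable {next}

theorem reachWithin_mono {a : α} {m n : ℕ} (h : m ≤ n) :
    reachWithin next a m ⊆ reachWithin next a n := by
  induction h with
  | refl => exact List.Subset.refl _
  | step _ ih => exact List.Subset.trans ih (List.subset_append_left _ _)

theorem exists_mem_reachWithin_iff {a b : α} :
    (∃ n, b ∈ reachWithin next a n) ↔ Relation.ReflTransGen (fun x y => y ∈ next x) a b := by
  constructor
  · rintro ⟨n, hn⟩
    induction n generalizing b with
    | zero => simp_all [reachWithin, Relation.ReflTransGen.refl]
    | succ n ih =>
      simp only [reachWithin, List.mem_append, List.mem_flatMap] at hn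
      rcases hn with hn | ⟨c, hc, hbc⟩
      · exact ih hn
      · exact (ih hc).tail hbc
  · intro h
    induction h with
    | refl => exact ⟨0, List.mem_singleton_self a⟩
    | tail _ hbc ih =>
      obtain ⟨n, hn⟩ := ih
      exact ⟨n + 1, List.mem_append_right _ (List.mem_flatMap.2 ⟨_, hn, hbc⟩)⟩

theorem mem_reachWithin_of_succ_subset {a b : α} {n : ℕ}
    (hn : reachWithin next a (n + 1) ⊆ reachWithin next a n)
    (hab : Relation.ReflTransGen (fun x y => y ∈ next x) a b) : b ∈ reachWithin next a n := by
  induction hab with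
  | refl => exact reachWithin_mono (Nat.zero_le n) (List.mem_singleton_self a)
  | tail _ hbc ih => exact hn (List.mem_append_right _ (List.mem_flatMap.2 ⟨_, ih, hbc⟩))

theorem exists_reachWithin_succ_subset {a : α}
    (hfin : {b | Relation.ReflTransGen (fun x y => y ∈ next x) a b}.Finite) :
    ∃ n, reachWithin next a (n + 1) ⊆ reachWithin next a n := by
  have hsub : ∀ n, {b | b ∈ reachWithin next a n} ∈
      {s | s ⊆ {b | Relation.ReflTransGen (fun x y => y ∈ next x) a b}} :=
    fun n b hb => exists_mem_reachWithin_iff.1 ⟨n, hb⟩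
  obtain ⟨m, n, hmn, heq⟩ := hfin.finite_subsets.exists_lt_map_eq_of_forall_mem hsub
  refine ⟨m, fun b hb => ?_⟩
  have : b ∈ {b | b ∈ reachWithin next a n} := reachWithin_mono hmn hb
  rwa [← heq] at this

theorem computable_reachWithin [Primcodable α] (hnext : Computable next) :
    Computable₂ (reachWithin next) := by
  have hexpand : Computable₂ fun (_ : α × ℕ) (p : ℕ × List α) => p.2 ++ p.2.flatMap next :=
    (Computable.list_append.comp (Computable.snd.comp Computable.snd)
      (Primrec.list_flatten.to_comp.comp (Computable.list_map (Computable.snd.comp Computable.snd)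
        (hnext.comp Computable.snd).to₂))).to₂
  refine (Computable.nat_rec Computable.snd
    (Computable.list_cons.comp Computable.fst (Computable.const [])) hexpand).of_eq fun p => ?_
  induction p.2 with
  | zero => rfl
  | succ n ih => simp [reachWithin, ih]

end Reach

section Search

variable {α : Type*} [Primcodable α] {next : α → List α} {p : α → Prop}

local notation "Reach" => Relation.ReflTransGen (fun x y => y ∈ next x)

theorem _root_.REPred.not_forall_reflTransGen (hnext : Computable next) (hp : ComputablePred p) :
    REPred fun a => ¬∀ b, Reach a b → p b := by
  have hbad : ComputablePred fun x : α × ℕ => ¬∀ b ∈ reachWithin next x.1 x.2, p b :=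
    (hp.forall_mem_list.comp (computable_reachWithin hnext)).not
  refine (REPred.exists_nat hbad).of_eq fun a => ?_
  simp only [← exists_mem_reachWithin_iff, not_forall, exists_prop]
  exact ⟨fun ⟨n, b, hb, hpb⟩ => ⟨b, ⟨n, hb⟩, hpb⟩, fun ⟨b, ⟨n, hb⟩, hpb⟩ => ⟨n, b, hb, hpb⟩⟩

theorem _root_.REPred.forall_reflTransGen (hnext : Computable next) (hp : ComputablePred p)
    (hfin : ∀ a, (∀ b, Reach a b → p b) → {b | Reach a b}.Finite) :
    REPred fun a => ∀ b, Reach a b → p b := by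
  have hreach := computable_reachWithin hnext
  have hclosed : ComputablePred fun x : α × ℕ =>
      reachWithin next x.1 (x.2 + 1) ⊆ reachWithin next x.1 x.2 ∧
        ∀ b ∈ reachWithin next x.1 x.2, p b :=
    (ComputablePred.list_subset.comp ((hreach.comp Computable.fst
      (Computable.succ.comp Computable.snd)).pair hreach)).and
      (hp.forall_mem_list.comp hreach)
  refine (REPred.exists_nat hclosed).of_eq fun a => ⟨?_, fun hall => ?_⟩
  · rintro ⟨n, hn, hpn⟩ b hab
    exact hpn b (mem_reachWithin_of_succ_subset hn hab)
  · obtain ⟨n, hn⟩ := exists_reachWithin_succ_subset (hfin a hall)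
    exact ⟨n, hn, fun b hb => hall b (exists_mem_reachWithin_iff.1 ⟨n, hb⟩)⟩

theorem _root_.ComputablePred.forall_reflTransGen (hnext : Computable next) (hp : ComputablePred p)
    (hfin : ∀ a, (∀ b, Reach a b → p b) → {b | Reach a b}.Finite) :
    ComputablePred fun a => ∀ b, Reach a b → p b :=
  ComputablePred.computable_iff_re_compl_re'.2
    ⟨REPred.forall_reflTransGen hnext hp hfin, REPred.not_forall_reflTransGen hnext hp⟩

end Search

theorem relativization_computable_general {A : Type*} [Primcodable A]
    (π : List A → List A → Prop)
    (P : List A → Prop) (hP : ComputablePred P)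
    (step : List A → List (List A)) (hstep : Computable step)
    (hstepSpec : ∀ x y : List A, OneStep π x y ↔ y ∈ step x)
    (hfin : ∀ w : List A, (∀ z, EqRel π w z → P z) → {z | EqRel π w z}.Finite) :
    ComputablePred (fun w : List A => ∀ z, EqRel π w z → P z) := by
  have hEqRel : EqRel π = Relation.ReflTransGen (fun x y => y ∈ step x) := by
    unfold EqRel
    congr
    funext x y
    exact propext (hstepSpec x y)
  rw [hEqRel] at hfin ⊢
  exact ComputablePred.forall_reflTransGen hstep hP hfin

/-- relativization of a decidable set of words is decidable, provided
every word whose class is contained in the set has a finite class, `π` is decidable and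
one-step rewriting is computably finitely branching. -/
theorem relativization_computable {A : Type*} [Primcodable A]
    (π : List A → List A → Prop) (hirr : ∀ x, ¬ π x x)
    (P : List A → Prop) (hP : ComputablePred P)
    (step : List A → List (List A)) (hstep : Computable step)
    (hstepSpec : ∀ x y : List A, OneStep π x y ↔ y ∈ step x)
    (hfin : ∀ w : List A, (∀ z, EqRel π w z → P z) → {z | EqRel π w z}.Finite) :
    ComputablePred (fun w : List A => ∀ z, EqRel π w z → P z) :=
  relativization_computable_general π P hP step hstep hstepSpec hfin

end SqFreePaper
end

section
/- Let π = σ ∪ ρ be a system of defining relations where σ = {(u_i,u_j) : 1 ≤ i < j ≤ n} and ρ = {(v_k,v_l) : 1 ≤ k < l ≤ m} with pairwise distinct u_i and pairwise distinct v_k. If the closure D̄_σ of the set D_σ = {u_1,…,u_n} under the relation =_ρ is infinite, then every word w that is square-free relative to π has a finite equivalence class [w]_π. -/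
/-
In a word whose whole `=_ρ`-class is square-free (ρ = {(v_k, v_l)}), two occurrences of words
`v_k` either coincide or are disjoint: a nesting or an overlap is turned into a square by one
rewriting step. Hence every word of the class of `w` arises from `w` by replacing pairwise
disjoint occurrences of words `v_k` by words `v_l`, which bounds its length and its alphabet
(Carpi–de Luca). If `D̄_σ` is infinite, some `u_i` has an infinite `=_ρ`-class, so some
`z₀ =_ρ u_i` contains a square. Then no word `π`-equivalent to a `π`-square-free `w` contains
any `u_j` as a factor, since it could be rewritten to `u_i` and on to `z₀`; so
`[w]_π = [w]_ρ`, which is finite by Carpi–de Luca.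
-/

namespace SqFreePaper

variable {A : Type*}

theorem exists_eq_append_of_append_eq_append {x s y t : List A} (h : x ++ s = y ++ t)
    (hle : x.length ≤ y.length) : ∃ e, y = x ++ e ∧ s = e ++ t := by
  rcases List.append_eq_append_iff.mp h with ⟨e, rfl, rfl⟩ | ⟨e, rfl, rfl⟩
  · exact ⟨e, rfl, rfl⟩
  · obtain rfl : e = [] :=
      List.eq_nil_of_length_eq_zero (by simp only [List.length_append] at hle; omega)
    exact ⟨[], by simp, by simp⟩

theorem IsSquareFreeWord.of_infix {x z : List A} (hz : IsSquareFreeWord z) (hx : x <:+: z) :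
    IsSquareFreeWord x := by
  obtain ⟨a, b, rfl⟩ := hx
  intro p s q rfl
  exact hz (a ++ p) s (q ++ b) (by simp)

theorem OneStep.append_append {π : List A → List A → Prop} {x y : List A} (h : OneStep π x y)
    (a b : List A) : OneStep π (a ++ x ++ b) (a ++ y ++ b) := by
  obtain ⟨r, s, p, q, rfl, rfl, hpq⟩ := h
  exact ⟨a ++ r, s ++ b, p, q, by simp, by simp, hpq⟩

theorem EqRel.append_append {π : List A → List A → Prop} {x y : List A} (h : EqRel π x y)
    (a b : List A) : EqRel π (a ++ x ++ b) (a ++ y ++ b) :=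
  Relation.ReflTransGen.lift (fun z => a ++ z ++ b) (fun _ _ hs => hs.append_append a b) _ _ h

theorem EqRel.mono {π π' : List A → List A → Prop} (h : ∀ x y, π x y → π' x y) {x y : List A}
    (hxy : EqRel π x y) : EqRel π' x y :=
  Relation.ReflTransGen.mono
    (fun _ _ ⟨r, s, p, q, h₁, h₂, hpq⟩ => ⟨r, s, p, q, h₁, h₂, hpq.imp (h _ _) (h _ _)⟩) _ _ hxy

section FamilyRel

variable {n : ℕ}

theorem eqRel_familyRel_replace (v : Fin n → List A) (x y : List A) (j k : Fin n) :
    EqRel (FamilyRel v) (x ++ v j ++ y) (x ++ v k ++ y) := by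
  rcases lt_trichotomy j k with h | rfl | h
  · exact .single ⟨x, y, v j, v k, rfl, rfl, .inl ⟨j, k, h, rfl, rfl⟩⟩
  · exact .refl
  · exact .single ⟨x, y, v j, v k, rfl, rfl, .inr ⟨k, j, h, rfl, rfl⟩⟩

theorem OneStep.exists_of_familyRel {v : Fin n → List A} {x y : List A}
    (h : OneStep (FamilyRel v) x y) : ∃ r s j k, x = r ++ v j ++ s ∧ y = r ++ v k ++ s := by
  obtain ⟨r, s, p, q, rfl, rfl, ⟨j, k, -, rfl, rfl⟩ | ⟨j, k, -, rfl, rfl⟩⟩ := h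
  · exact ⟨r, s, j, k, rfl, rfl⟩
  · exact ⟨r, s, k, j, rfl, rfl⟩

theorem exists_infinite_eqRel_class {u : Fin n → List A} {ρ : List A → List A → Prop}
    (h : (ClosureD (FamilyRel u) ρ).Infinite) : ∃ i, {z | EqRel ρ (u i) z}.Infinite := by
  by_contra! hfin
  refine h ((Set.finite_iUnion hfin).subset ?_)
  rintro x ⟨x₀, ⟨y, ⟨i, j, -, rfl, rfl⟩ | ⟨i, j, -, rfl, rfl⟩⟩, hx⟩
  · exact Set.mem_iUnion.mpr ⟨i, hx⟩
  · exact Set.mem_iUnion.mpr ⟨j, hx⟩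

end FamilyRel

theorem finite_setOf_length_le_forall_mem {S : Set A} (hS : S.Finite) (N : ℕ) :
    {l : List A | l.length ≤ N ∧ ∀ x ∈ l, x ∈ S}.Finite := by
  have := hS.to_subtype
  refine ((List.finite_length_le S N).image (List.map Subtype.val)).subset ?_
  rintro l ⟨hl, hlS⟩
  lift l to List S using hlS
  exact ⟨l, by simpa using hl, rfl⟩

section Slots

variable {ι : Type*}

def fillSlots (f : ι → List A) : List (List A × ι) → List A → List A
  | [], t => t
  | (a, i) :: S, t => a ++ f i ++ fillSlots f S t

/-- `z` arises from `w` by replacing pairwise disjoint occurrences of words `v k` by words `v l`;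
a slot `(a, k, l)` carries the gap `a` before it, `v k` in `w` and `v l` in `z`. -/
def SlotRewrite (v : ι → List A) (w z : List A) : Prop :=
  ∃ (S : List (List A × ι × ι)) (t : List A),
    w = fillSlots (v ∘ Prod.fst) S t ∧ z = fillSlots (v ∘ Prod.snd) S t

def IsolatedOcc (v : ι → List A) (c : List A) (k : ι) (d : List A) : Prop :=
  ∀ c' k' d', c ++ v k ++ d = c' ++ v k' ++ d' →
    c.length + (v k).length ≤ c'.length ∨ c'.length + (v k').length ≤ c.length ∨
      (c = c' ∧ d = d')

theorem IsolatedOcc.of_append_left {v : ι → List A} {p c d : List A} {k : ι}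
    (h : IsolatedOcc v (p ++ c) k d) : IsolatedOcc v c k d := by
  intro c' k' d' heq
  have := h (p ++ c') k' d' (by simpa only [List.append_assoc] using congrArg (p ++ ·) heq)
  simp only [List.length_append] at this
  rcases this with h₁ | h₁ | ⟨h₁, h₂⟩
  · exact .inl (by omega)
  · exact .inr (.inl (by omega))
  · exact .inr (.inr ⟨List.append_cancel_left h₁, h₂⟩)

theorem exists_fillSlots_rewrite (v : ι → List A) (l : ι) :
    ∀ (S : List (List A × ι × ι)) (t c d : List A) (k : ι),
      fillSlots (v ∘ Prod.snd) S t = c ++ v k ++ d → IsolatedOcc v c k d →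
      ∃ S' t', fillSlots (v ∘ Prod.fst) S' t' = fillSlots (v ∘ Prod.fst) S t ∧
        fillSlots (v ∘ Prod.snd) S' t' = c ++ v l ++ d
  | [], t, c, d, k, hz, _ => ⟨[(c, k, l)], d, by simp [fillSlots, ← hz], by simp [fillSlots]⟩
  | (a, k₁, l₁) :: S, t, c, d, k, hz, hiso => by
    simp only [fillSlots, Function.comp_apply] at hz ⊢
    rcases hiso a l₁ _ hz.symm with hle | hle | ⟨rfl, rfl⟩
    · obtain ⟨e, rfl, rfl⟩ := exists_eq_append_of_append_eq_append (x := c ++ v k) (y := a)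
        (by simpa only [List.append_assoc] using hz.symm) (by simpa using hle)
      exact ⟨(c, k, l) :: (e, k₁, l₁) :: S, t, by simp [fillSlots], by simp [fillSlots]⟩
    · obtain ⟨c', rfl, hS⟩ := exists_eq_append_of_append_eq_append (x := a ++ v l₁) (y := c)
        (by simpa only [List.append_assoc] using hz) (by simpa using hle)
      obtain ⟨S', t', h₁, h₂⟩ := exists_fillSlots_rewrite v l S t c' d k
        (by simpa only [List.append_assoc] using hS) hiso.of_append_left
      exact ⟨(a, k₁, l₁) :: S', t', by simp [fillSlots, h₁], by simp [fillSlots, h₂]⟩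
    · exact ⟨(c, k₁, l) :: S, t, rfl, by simp [fillSlots]⟩

theorem length_fillSlots_le {f g : ι → List A} {M : ℕ} (hM : 1 ≤ M)
    (hfg : ∀ i, (g i).length ≤ M * (f i).length) :
    ∀ S t, (fillSlots g S t).length ≤ M * (fillSlots f S t).length
  | [], t => Nat.le_mul_of_pos_left _ hM
  | (a, i) :: S, t => by
    have ha : a.length ≤ M * a.length := Nat.le_mul_of_pos_left _ hM
    have := length_fillSlots_le hM hfg S t
    have := hfg i
    simp only [fillSlots, List.length_append, Nat.mul_add]
    omega

theorem mem_fillSlots {f g : ι → List A} {x : A} :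
    ∀ S t, x ∈ fillSlots g S t → x ∈ fillSlots f S t ∨ ∃ i, x ∈ g i
  | [], _, h => .inl h
  | (a, i) :: S, t, h => by
    simp only [fillSlots, List.mem_append] at h ⊢
    rcases h with (h | h) | h
    · exact .inl (.inl (.inl h))
    · exact .inr ⟨i, h⟩
    · exact (mem_fillSlots S t h).imp .inr id

namespace SlotRewrite

theorem refl (v : ι → List A) (w : List A) : SlotRewrite v w w := ⟨[], w, rfl, rfl⟩

variable {v : ι → List A} {w z : List A}

theorem rewrite {c d : List A} {k : ι} (h : SlotRewrite v w (c ++ v k ++ d))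
    (hiso : IsolatedOcc v c k d) (l : ι) : SlotRewrite v w (c ++ v l ++ d) := by
  obtain ⟨S, t, rfl, hz⟩ := h
  obtain ⟨S', t', h₁, h₂⟩ := exists_fillSlots_rewrite v l S t c d k hz.symm hiso
  exact ⟨S', t', h₁.symm, h₂.symm⟩

theorem length_le (h : SlotRewrite v w z) {M : ℕ} (hM : 1 ≤ M)
    (hv : ∀ k l, (v l).length ≤ M * (v k).length) : z.length ≤ M * w.length := by
  obtain ⟨S, t, rfl, rfl⟩ := h
  exact length_fillSlots_le hM (fun p => hv p.1 p.2) S t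

theorem mem (h : SlotRewrite v w z) {x : A} (hx : x ∈ z) : x ∈ w ∨ ∃ k, x ∈ v k := by
  obtain ⟨S, t, rfl, rfl⟩ := h
  exact (mem_fillSlots S t hx).imp_right fun ⟨p, hp⟩ => ⟨p.2, hp⟩

end SlotRewrite

end Slots

namespace SFRel

variable {n : ℕ} {v : Fin n → List A} {w : List A}

theorem isSquareFreeWord_replace (hw : SFRel (FamilyRel v) w) {x y : List A} {j : Fin n}
    (hz : EqRel (FamilyRel v) w (x ++ v j ++ y)) (k : Fin n) :
    IsSquareFreeWord (x ++ v k ++ y) :=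
  hw _ (hz.trans (eqRel_familyRel_replace v x y j k))

theorem eq_nil_of_eq_nil (hw : SFRel (FamilyRel v) w) {j : Fin n} (hj : v j = []) (k : Fin n) :
    v k = [] := by
  have h₁ : EqRel (FamilyRel v) w (w ++ v k ++ []) := by
    simpa [hj] using eqRel_familyRel_replace v w [] j k
  have h₂ : EqRel (FamilyRel v) w (w ++ v k ++ v j ++ []) := by simpa [hj] using h₁
  exact hw.isSquareFreeWord_replace h₂ k w (v k) [] (by simp)

theorem exists_length_le_mul (hw : SFRel (FamilyRel v) w) :
    ∃ M, 1 ≤ M ∧ ∀ j k, (v k).length ≤ M * (v j).length := by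
  classical
  refine ⟨max 1 (Finset.univ.sup fun k => (v k).length), le_max_left _ _, fun j k => ?_⟩
  by_cases hj : v j = []
  · simp [hw.eq_nil_of_eq_nil hj k]
  · calc (v k).length ≤ Finset.univ.sup fun k => (v k).length :=
          Finset.le_sup (f := fun k => (v k).length) (Finset.mem_univ k)
      _ ≤ max 1 (Finset.univ.sup fun k => (v k).length) * 1 := by simp
      _ ≤ _ := Nat.mul_le_mul_left _ (List.length_pos_iff.mpr hj)

/-- A nesting `v k₁ = e ++ v k₂ ++ h` becomes the squares `e e` and `h h` after rewriting `v k₂` to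
`v k₁`, and an overlap `v k₁ = e ++ f`, `v k₂ = f ++ g` the square `g g` after rewriting `v k₁`
to `v k₂`. -/
theorem disjoint_or_eq_of_length_le (hw : SFRel (FamilyRel v) w) {c₁ c₂ d₁ d₂ : List A}
    {k₁ k₂ : Fin n} (hz : EqRel (FamilyRel v) w (c₁ ++ v k₁ ++ d₁))
    (heq : c₁ ++ v k₁ ++ d₁ = c₂ ++ v k₂ ++ d₂) (hle : c₁.length ≤ c₂.length) :
    c₁.length + (v k₁).length ≤ c₂.length ∨ (c₁ = c₂ ∧ d₁ = d₂) := by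
  obtain ⟨e, rfl, he⟩ := exists_eq_append_of_append_eq_append (x := c₁) (y := c₂)
    (by simpa only [List.append_assoc] using heq) hle
  rcases le_or_gt (v k₁).length e.length with hdisj | hdisj
  · exact .inl (by simpa using hdisj)
  rcases le_or_gt (e.length + (v k₂).length) (v k₁).length with hnest | hnest
  · obtain ⟨h, hk₁, rfl⟩ := exists_eq_append_of_append_eq_append (x := e ++ v k₂) (y := v k₁)
      (by simpa only [List.append_assoc] using he.symm) (by simpa using hnest)
    have hsf := hw.isSquareFreeWord_replace (x := c₁ ++ e) (heq ▸ hz) k₁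
    obtain rfl : e = [] := hsf c₁ e (v k₂ ++ h ++ h ++ d₁) (by rw [hk₁]; simp)
    obtain rfl : h = [] := hsf (c₁ ++ v k₂) h d₁ (by rw [hk₁]; simp)
    exact .inr ⟨by simp, rfl⟩
  · obtain ⟨f, hk₁, hf⟩ := exists_eq_append_of_append_eq_append (x := e) (y := v k₁)
      he.symm hdisj.le
    have hfk₂ : f.length ≤ (v k₂).length := by
      have := congrArg List.length hk₁
      simp only [List.length_append] at this
      omega
    obtain ⟨g, hk₂, rfl⟩ := exists_eq_append_of_append_eq_append (x := f) (y := v k₂)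
      hf.symm hfk₂
    obtain rfl : g = [] :=
      hw.isSquareFreeWord_replace hz k₂ (c₁ ++ f) g d₂ (by rw [hk₂]; simp)
    have h₁ := congrArg List.length hk₁
    have h₂ := congrArg List.length hk₂
    simp only [List.length_append, List.length_nil] at h₁ h₂
    omega

theorem isolatedOcc (hw : SFRel (FamilyRel v) w) {c d : List A} {k : Fin n}
    (hz : EqRel (FamilyRel v) w (c ++ v k ++ d)) : IsolatedOcc v c k d := by
  intro c' k' d' heq
  rcases le_total c.length c'.length with hle | hle
  · exact (hw.disjoint_or_eq_of_length_le hz heq hle).imp_right .inr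
  · rcases hw.disjoint_or_eq_of_length_le (heq ▸ hz) heq.symm hle with h | ⟨rfl, rfl⟩
    · exact .inr (.inl h)
    · exact .inr (.inr ⟨rfl, rfl⟩)

theorem slotRewrite (hw : SFRel (FamilyRel v) w) {z : List A}
    (hz : EqRel (FamilyRel v) w z) : SlotRewrite v w z := by
  induction hz with
  | refl => exact SlotRewrite.refl v w
  | tail hwz hstep ih =>
    obtain ⟨r, s, j, k, rfl, rfl⟩ := hstep.exists_of_familyRel
    exact ih.rewrite (hw.isolatedOcc hwz) k

theorem finite_eqRel_class (hw : SFRel (FamilyRel v) w) :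
    {z | EqRel (FamilyRel v) w z}.Finite := by
  obtain ⟨M, hM, hv⟩ := hw.exists_length_le_mul
  have hS : ({x | x ∈ w} ∪ ⋃ k, {x | x ∈ v k}).Finite :=
    w.finite_toSet.union (Set.finite_iUnion fun k => (v k).finite_toSet)
  refine (finite_setOf_length_le_forall_mem hS (M * w.length)).subset fun z hz => ?_
  have hwz := hw.slotRewrite hz
  refine ⟨hwz.length_le hM hv, fun x hx => ?_⟩
  rcases hwz.mem hx with h | ⟨k, h⟩
  · exact .inl h
  · exact .inr (Set.mem_iUnion.mpr ⟨k, h⟩)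

end SFRel

theorem eqRel_of_piRel_of_forall_not_infix {σ ρ : List A → List A → Prop} {w : List A}
    (h : ∀ z, EqRel (PiRel σ ρ) w z → ∀ x ∈ DWords σ, ¬ x <:+: z) {z : List A}
    (hz : EqRel (PiRel σ ρ) w z) : EqRel ρ w z := by
  induction hz with
  | refl => exact .refl
  | tail hwb hstep ih =>
    obtain ⟨r, s, p, q, rfl, rfl, hpq⟩ := hstep
    have hp : p ∉ DWords σ := fun hp => h _ hwb p hp ⟨r, s, rfl⟩
    refine ih.tail ⟨r, s, p, q, rfl, rfl, ?_⟩
    rcases hpq with (hσ | hρ) | (hσ | hρ)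
    · exact absurd ⟨q, .inl hσ⟩ hp
    · exact .inl hρ
    · exact absurd ⟨q, .inr hσ⟩ hp
    · exact .inr hρ

theorem SFRel.not_infix_of_eqRel {n : ℕ} {u : Fin n → List A} {ρ : List A → List A → Prop}
    {w : List A} (hw : SFRel (PiRel (FamilyRel u) ρ) w) {i₀ : Fin n} {z₀ : List A}
    (hz₀ : EqRel ρ (u i₀) z₀) (hsq : ¬ IsSquareFreeWord z₀) :
    ∀ z, EqRel (PiRel (FamilyRel u) ρ) w z → ∀ x ∈ DWords (FamilyRel u), ¬ x <:+: z := by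
  rintro z hz x hx ⟨a, b, rfl⟩
  obtain ⟨i, rfl⟩ : ∃ i, x = u i := by
    obtain ⟨y, ⟨i, j, -, rfl, -⟩ | ⟨i, j, -, -, rfl⟩⟩ := hx <;> exact ⟨_, rfl⟩
  have h₁ : EqRel (PiRel (FamilyRel u) ρ) (a ++ u i ++ b) (a ++ u i₀ ++ b) :=
    (eqRel_familyRel_replace u a b i i₀).mono fun _ _ => .inl
  have h₂ : EqRel (PiRel (FamilyRel u) ρ) (a ++ u i₀ ++ b) (a ++ z₀ ++ b) :=
    (hz₀.append_append a b).mono fun _ _ => .inr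
  exact hsq ((hw _ (hz.trans (h₁.trans h₂))).of_infix ⟨a, b, rfl⟩)

theorem finite_class_of_infinite_closure_general {A : Type*} {nu nv : ℕ}
    (u : Fin nu → List A) (v : Fin nv → List A)
    (σ ρ : List A → List A → Prop) (hσ : σ = FamilyRel u) (hρ : ρ = FamilyRel v)
    (hinf : (ClosureD σ ρ).Infinite) :
    ∀ w : List A, SFRel (PiRel σ ρ) w → {z | EqRel (PiRel σ ρ) w z}.Finite := by
  subst hσ hρ
  intro w hw
  obtain ⟨i₀, hi₀⟩ := exists_infinite_eqRel_class hinf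
  obtain ⟨z₀, hz₀, hsq⟩ : ∃ z₀, EqRel (FamilyRel v) (u i₀) z₀ ∧ ¬ IsSquareFreeWord z₀ := by
    by_contra! h
    exact hi₀ (SFRel.finite_eqRel_class h)
  have hwρ : SFRel (FamilyRel v) w := fun z hz => hw z (hz.mono fun _ _ => .inr)
  exact hwρ.finite_eqRel_class.subset fun z hz =>
    eqRel_of_piRel_of_forall_not_infix (hw.not_infix_of_eqRel hz₀ hsq) hz

/-- if `D̄_σ` (closure of `D_σ` under `=_ρ`) is infinite, every word
square-free relative to `π = σ ∪ ρ` has a finite equivalence class. -/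
theorem finite_class_of_infinite_closure {A : Type*} {nu nv : ℕ}
    (u : Fin nu → List A) (v : Fin nv → List A)
    (hu : Function.Injective u) (hv : Function.Injective v)
    (σ ρ : List A → List A → Prop) (hσ : σ = FamilyRel u) (hρ : ρ = FamilyRel v)
    (hinf : (ClosureD σ ρ).Infinite) :
    ∀ w : List A, SFRel (PiRel σ ρ) w → {z | EqRel (PiRel σ ρ) w z}.Finite :=
  finite_class_of_infinite_closure_general u v σ ρ hσ hρ hinf

end SqFreePaper
end

section
/- Let x_1,…,x_n be a linear decomposition of x and y_1,…,y_m a linear decomposition of y, and suppose x_n = x'·e and y_1 = e·y' for some words e, x', y'. Then the word z = x_1⋯x_{n-1}·x'·e·y'·y_2⋯y_m belongs to Lin(n + m + sign(|x'·y'|) − 1), where sign(t) = 0 if t = 0 and 1 otherwise. Specifically, if x' is nonempty then x_1,…,x_{n-1},x',y_1,…,y_m is a linear decomposition of z; if y' is nonempty then x_1,…,x_n,y',y_2,…,y_m is one; and if x' = y' = ∅ then x_1,…,x_{n-1},e,y_2,…,y_m is one. -/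
namespace SqFreePaper

variable {A : Type*}

/-!
A linear decomposition is a chain of blocks `p i ++ x i ++ q i`, each in `D_τ`, subject to
conditions that only involve neighbouring blocks. Two decompositions therefore concatenate as
soon as the one new junction satisfies these conditions, and the last member of `x` (or the first
member of `y`) may be shortened by moving part of it into its complementary word, since no block
changes. Gluing along `e` is such a concatenation: if `x' ≠ []`, then `e` becomes the complement
`q n` of `x'`; if `y' ≠ []`, it becomes the complement `p 1` of `y'`; if `x n = y 1 = e`, one of the
two copies of `e` is dropped: `y 1` when `p 2 = []` in the decomposition of `y`, and `x n`
otherwise, because then `q 1 = []` there.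
-/

section Sequences

variable {α : Type*}

def seqAppend (f g : ℕ → α) (n j : ℕ) : α :=
  if j ≤ n then f j else g (j - n)

lemma seqAppend_of_le {f g : ℕ → α} {n j : ℕ} (h : j ≤ n) : seqAppend f g n j = f j :=
  if_pos h

lemma seqAppend_of_lt {f g : ℕ → α} {n j : ℕ} (h : n < j) : seqAppend f g n j = g (j - n) :=
  if_neg (Nat.not_le.mpr h)

lemma seqAppend_update_eq_ite (f g : ℕ → α) (n : ℕ) (a : α) :
    seqAppend (Function.update f n a) g n =
      fun j => if j < n then f j else if j = n then a else g (j - n) := by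
  funext j
  simp only [seqAppend, Function.update_apply]
  split_ifs <;> first | rfl | omega

lemma seqAppend_update_one_eq_ite (f g : ℕ → α) (n : ℕ) (a : α) :
    seqAppend f (Function.update g 1 a) n =
      fun j => if j ≤ n then f j else if j = n + 1 then a else g (j - n) := by
  funext j
  simp only [seqAppend, Function.update_apply]
  split_ifs <;> first | rfl | omega

end Sequences

lemma wordSeg_congr {f g : ℕ → List A} {a b l : ℕ} (h : ∀ k < l, f (a + k) = g (b + k)) :
    wordSeg f a l = wordSeg g b l := by
  simp only [wordSeg, List.range'_eq_map_range, List.map_map]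
  exact congrArg _ (List.map_congr_left fun k hk => h k (List.mem_range.mp hk))

lemma wordSeg_add (f : ℕ → List A) (a l₁ l₂ : ℕ) :
    wordSeg f a (l₁ + l₂) = wordSeg f a l₁ ++ wordSeg f (a + l₁) l₂ := by
  simp only [wordSeg, ← List.range'_append, one_mul, List.map_append, List.flatten_append]

lemma wordSeg_one (f : ℕ → List A) (a : ℕ) : wordSeg f a 1 = f a := by
  simp [wordSeg]

lemma wordSeg_seqAppend (f g : ℕ → List A) (n m : ℕ) :
    wordSeg (seqAppend f g n) 1 (n + m) = wordSeg f 1 n ++ wordSeg g 1 m := by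
  rw [wordSeg_add]
  congr 1
  · exact wordSeg_congr fun k hk => seqAppend_of_le (by omega)
  · exact wordSeg_congr fun k hk => by rw [seqAppend_of_lt (by omega)]; congr 1; omega

lemma wordSeg_update_last (f : ℕ → List A) {n : ℕ} (hn : 1 ≤ n) (a : List A) :
    wordSeg (Function.update f n a) 1 n = wordSeg f 1 (n - 1) ++ a := by
  obtain ⟨k, rfl⟩ := Nat.exists_eq_add_of_le' hn
  rw [wordSeg_add, wordSeg_one, Nat.add_sub_cancel, add_comm 1 k, Function.update_self]
  exact congrArg (· ++ a) (wordSeg_congr fun i hi => Function.update_of_ne (by omega) _ _)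

lemma wordSeg_update_one (f : ℕ → List A) {m : ℕ} (hm : 1 ≤ m) (a : List A) :
    wordSeg (Function.update f 1 a) 1 m = a ++ wordSeg f 2 (m - 1) := by
  obtain ⟨k, rfl⟩ := Nat.exists_eq_add_of_le hm
  rw [wordSeg_add, wordSeg_one, Nat.add_sub_cancel_left, Function.update_self]
  exact congrArg (a ++ ·) (wordSeg_congr fun i hi => Function.update_of_ne (by omega) _ _)

lemma wordSeg_eq_wordSeg_append {f : ℕ → List A} {n : ℕ} (hn : 1 ≤ n) :
    wordSeg f 1 n = wordSeg f 1 (n - 1) ++ f n := by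
  simpa using wordSeg_update_last f hn (f n)

lemma wordSeg_eq_append_wordSeg {f : ℕ → List A} {m : ℕ} (hm : 1 ≤ m) :
    wordSeg f 1 m = f 1 ++ wordSeg f 2 (m - 1) := by
  simpa using wordSeg_update_one f hm (f 1)

lemma wordSeg_shift (f : ℕ → List A) (l : ℕ) :
    wordSeg (fun j => f (j + 1)) 1 l = wordSeg f 2 l :=
  wordSeg_congr fun k _ => by congr 1; omega

section Chain

variable {σ ρ : List A → List A → Prop}

lemma Sim.mem_dTau_left {a b : List A} (h : Sim σ ρ a b) : a ∈ DTau σ ρ :=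
  h.imp And.left And.left

lemma sim_self_of_mem_dTau {a : List A} (h : a ∈ DTau σ ρ) : Sim σ ρ a a :=
  h.imp (fun h => ⟨h, h⟩) (fun h => ⟨h, h⟩)

structure IsChain (σ ρ : List A → List A → Prop) (n : ℕ) (x p q : ℕ → List A) : Prop where
  ne_nil : ∀ i, 1 ≤ i → i ≤ n → x i ≠ []
  mem_dTau : ∀ i, 1 ≤ i → i ≤ n → p i ++ x i ++ q i ∈ DTau σ ρ
  sim_left : ∀ i, 1 < i → i ≤ n → ∃ w, Sim σ ρ (p i ++ x i ++ q i) (q (i - 1) ++ w)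
  sim_right : ∀ i, 1 ≤ i → i < n → ∃ w, Sim σ ρ (p i ++ x i ++ q i) (w ++ p (i + 1))
  seam : ∀ i, 1 ≤ i → i < n → q i = [] ∨ p (i + 1) = []

theorem isLinDecomp_iff {n : ℕ} {x p q : ℕ → List A} :
    IsLinDecomp σ ρ n x p q ↔ 1 ≤ n ∧ IsChain σ ρ n x p q ∧ p 1 = [] ∧ q n = [] := by
  constructor
  · rintro ⟨hn, hne, ⟨u, v, hu, hv⟩, hseam, hp, hq, hone⟩
    refine ⟨hn, ⟨hne, fun i hi hin => ?_, fun i hi hin => ⟨u i, hu i hi hin⟩,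
      fun i hi hin => ⟨v i, hv i hi hin⟩, hseam⟩, hp, hq⟩
    rcases hin.lt_or_eq with hin | rfl
    · exact (hv i hi hin).mem_dTau_left
    rcases hi.lt_or_eq with hi | rfl
    · exact (hu i hi le_rfl).mem_dTau_left
    simpa [hp, hq] using hone rfl
  · rintro ⟨hn, hc, hp, hq⟩
    choose! u hu using hc.sim_left
    choose! v hv using hc.sim_right
    refine ⟨hn, hc.ne_nil, ⟨u, v, hu, hv⟩, hc.seam, hp, hq, fun h1 => ?_⟩
    subst h1
    simpa [hp, hq] using hc.mem_dTau 1 le_rfl le_rfl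

variable {n m : ℕ} {x y p q p' q' : ℕ → List A} {e x' y' : List A}

theorem IsChain.sim_self (h : IsChain σ ρ n x p q) {i : ℕ} (hi : 1 ≤ i) (hin : i ≤ n) :
    Sim σ ρ (p i ++ x i ++ q i) (p i ++ x i ++ q i) :=
  sim_self_of_mem_dTau (h.mem_dTau i hi hin)

theorem IsChain.exists_sim_nil_append (h : IsChain σ ρ n x p q) {i : ℕ} (hi : 1 ≤ i)
    (hin : i ≤ n) : ∃ w, Sim σ ρ (p i ++ x i ++ q i) ([] ++ w) :=
  ⟨_, h.sim_self hi hin⟩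

theorem IsChain.exists_sim_append_nil (h : IsChain σ ρ n x p q) {i : ℕ} (hi : 1 ≤ i)
    (hin : i ≤ n) : ∃ w, Sim σ ρ (p i ++ x i ++ q i) (w ++ []) :=
  ⟨p i ++ x i ++ q i, by simpa using h.sim_self hi hin⟩

theorem IsChain.mono (h : IsChain σ ρ n x p q) {k : ℕ} (hk : k ≤ n) : IsChain σ ρ k x p q :=
  ⟨fun i hi hik => h.ne_nil i hi (hik.trans hk), fun i hi hik => h.mem_dTau i hi (hik.trans hk),
    fun i hi hik => h.sim_left i hi (hik.trans hk),
    fun i hi hik => h.sim_right i hi (hik.trans_le hk), fun i hi hik => h.seam i hi (hik.trans_le hk)⟩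

theorem IsChain.shift {k : ℕ} (h : IsChain σ ρ (n + k) x p q) :
    IsChain σ ρ n (fun j => x (j + k)) (fun j => p (j + k)) (fun j => q (j + k)) where
  ne_nil i hi hin := h.ne_nil (i + k) (by omega) (by omega)
  mem_dTau i hi hin := h.mem_dTau (i + k) (by omega) (by omega)
  sim_left i hi hin := by
    simpa only [show i - 1 + k = i + k - 1 by omega] using h.sim_left (i + k) (by omega) (by omega)
  sim_right i hi hin := by
    simpa only [show i + 1 + k = i + k + 1 by omega] using h.sim_right (i + k) (by omega) (by omega)
  seam i hi hin := by
    simpa only [show i + 1 + k = i + k + 1 by omega] using h.seam (i + k) (by omega) (by omega)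

theorem IsChain.update_last (h : IsChain σ ρ n x p q) {a b : List A} (hab : x n ++ q n = a ++ b)
    (ha : a ≠ []) : IsChain σ ρ n (Function.update x n a) p (Function.update q n b) := by
  have block : ∀ i, p i ++ Function.update x n a i ++ Function.update q n b i = p i ++ x i ++ q i
  · intro i
    rcases eq_or_ne i n with rfl | hi
    · simp [List.append_assoc, hab]
    · simp [Function.update_of_ne hi]
  refine ⟨fun i hi hin => ?_, fun i hi hin => ?_, fun i hi hin => ?_, fun i hi hin => ?_,
    fun i hi hin => ?_⟩
  · rcases hin.lt_or_eq with hin | rfl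
    · simpa [Function.update_of_ne hin.ne] using h.ne_nil i hi hin.le
    · simpa using ha
  · exact block i ▸ h.mem_dTau i hi hin
  · simpa [block, Function.update_of_ne (show i - 1 ≠ n by omega)] using h.sim_left i hi hin
  · exact block i ▸ h.sim_right i hi hin
  · simpa [Function.update_of_ne hin.ne] using h.seam i hi hin

theorem IsChain.update_first (h : IsChain σ ρ n x p q) {a b : List A} (hab : p 1 ++ x 1 = a ++ b)
    (hb : b ≠ []) : IsChain σ ρ n (Function.update x 1 b) (Function.update p 1 a) q := by
  have block : ∀ i, Function.update p 1 a i ++ Function.update x 1 b i ++ q i = p i ++ x i ++ q i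
  · intro i
    rcases eq_or_ne i 1 with rfl | hi
    · simp [hab]
    · simp [Function.update_of_ne hi]
  refine ⟨fun i hi hin => ?_, fun i hi hin => ?_, fun i hi hin => ?_, fun i hi hin => ?_,
    fun i hi hin => ?_⟩
  · rcases hi.lt_or_eq with hi | rfl
    · simpa [Function.update_of_ne hi.ne'] using h.ne_nil i hi.le hin
    · simpa using hb
  · exact block i ▸ h.mem_dTau i hi hin
  · exact block i ▸ h.sim_left i hi hin
  · simpa [block, Function.update_of_ne (show i + 1 ≠ 1 by omega)] using h.sim_right i hi hin
  · simpa [Function.update_of_ne (show i + 1 ≠ 1 by omega)] using h.seam i hi hin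

theorem IsChain.append (hx : IsChain σ ρ n x p q) (hy : IsChain σ ρ m y p' q')
    (hseam : 0 < n → 0 < m → q n = [] ∨ p' 1 = [])
    (hleft : 0 < n → 0 < m → ∃ w, Sim σ ρ (p' 1 ++ y 1 ++ q' 1) (q n ++ w))
    (hright : 0 < n → 0 < m → ∃ w, Sim σ ρ (p n ++ x n ++ q n) (w ++ p' 1)) :
    IsChain σ ρ (n + m) (seqAppend x y n) (seqAppend p p' n) (seqAppend q q' n) := by
  refine ⟨fun i hi hin => ?_, fun i hi hin => ?_, fun i hi hin => ?_, fun i hi hin => ?_,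
    fun i hi hin => ?_⟩
  · rcases le_or_gt i n with h | h
    · simpa only [seqAppend_of_le h] using hx.ne_nil i hi h
    · simpa only [seqAppend_of_lt h] using hy.ne_nil (i - n) (by omega) (by omega)
  · rcases le_or_gt i n with h | h
    · simpa only [seqAppend_of_le h] using hx.mem_dTau i hi h
    · simpa only [seqAppend_of_lt h] using hy.mem_dTau (i - n) (by omega) (by omega)
  · rcases le_or_gt i n with h | h
    · simpa only [seqAppend_of_le h, seqAppend_of_le (show i - 1 ≤ n by omega)]
        using hx.sim_left i hi h
    rcases (show n + 1 ≤ i by omega).eq_or_lt with rfl | h'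
    · simpa only [seqAppend_of_lt h, Nat.add_sub_cancel, seqAppend_of_le le_rfl,
        Nat.add_sub_cancel_left] using hleft (by omega) (by omega)
    · simpa only [seqAppend_of_lt h, seqAppend_of_lt (show n < i - 1 by omega),
        show i - 1 - n = i - n - 1 by omega] using hy.sim_left (i - n) (by omega) (by omega)
  · rcases lt_or_ge i n with h | h
    · simpa only [seqAppend_of_le h.le, seqAppend_of_le (show i + 1 ≤ n by omega)]
        using hx.sim_right i hi h
    rcases h.eq_or_lt with rfl | h'
    · simpa only [seqAppend_of_le le_rfl, seqAppend_of_lt (Nat.lt_add_one n),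
        Nat.add_sub_cancel_left] using hright (by omega) (by omega)
    · simpa only [seqAppend_of_lt h', seqAppend_of_lt (show n < i + 1 by omega),
        show i + 1 - n = i - n + 1 by omega] using hy.sim_right (i - n) (by omega) (by omega)
  · rcases lt_or_ge i n with h | h
    · simpa only [seqAppend_of_le h.le, seqAppend_of_le (show i + 1 ≤ n by omega)]
        using hx.seam i hi h
    rcases h.eq_or_lt with rfl | h'
    · simpa only [seqAppend_of_le le_rfl, seqAppend_of_lt (Nat.lt_add_one n),
        Nat.add_sub_cancel_left] using hseam (by omega) (by omega)
    · simpa only [seqAppend_of_lt h', seqAppend_of_lt (show n < i + 1 by omega),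
        show i + 1 - n = i - n + 1 by omega] using hy.seam (i - n) (by omega) (by omega)

theorem IsLinDecomp.glue_of_prefix_ne_nil (Hx : IsLinDecomp σ ρ n x p q)
    (Hy : IsLinDecomp σ ρ m y p' q') (hxn : x n = x' ++ e) (hy1 : y 1 = e ++ y')
    (hx' : x' ≠ []) :
    ∃ P Q, IsLinDecomp σ ρ (n + m) (seqAppend (Function.update x n x') y n) P Q := by
  obtain ⟨hn, hx, hp, hq⟩ := isLinDecomp_iff.mp Hx
  obtain ⟨hm, hy, hp', hq'⟩ := isLinDecomp_iff.mp Hy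
  have hx₁ := hx.update_last (b := e) (by simp [hxn, hq]) hx'
  refine ⟨_, _, isLinDecomp_iff.mpr ⟨by omega, hx₁.append hy (fun _ _ => Or.inr hp')
    (fun _ _ => ⟨y' ++ q' 1, ?_⟩) (fun _ _ => hp' ▸ hx₁.exists_sim_append_nil hn le_rfl), ?_, ?_⟩⟩
  · simpa [hp', hy1] using hy.sim_self le_rfl hm
  · rwa [seqAppend_of_le hn]
  · rwa [seqAppend_of_lt (by omega), Nat.add_sub_cancel_left]

theorem IsLinDecomp.glue_of_suffix_ne_nil (Hx : IsLinDecomp σ ρ n x p q)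
    (Hy : IsLinDecomp σ ρ m y p' q') (hxn : x n = x' ++ e) (hy1 : y 1 = e ++ y')
    (hy' : y' ≠ []) :
    ∃ P Q, IsLinDecomp σ ρ (n + m) (seqAppend x (Function.update y 1 y') n) P Q := by
  obtain ⟨hn, hx, hp, hq⟩ := isLinDecomp_iff.mp Hx
  obtain ⟨hm, hy, hp', hq'⟩ := isLinDecomp_iff.mp Hy
  have hy₁ := hy.update_first (a := e) (by simp [hy1, hp']) hy'
  refine ⟨_, _, isLinDecomp_iff.mpr ⟨by omega, hx.append hy₁ (fun _ _ => Or.inl hq)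
    (fun _ _ => hq ▸ hy₁.exists_sim_nil_append le_rfl hm) (fun _ _ => ⟨p n ++ x', ?_⟩), ?_, ?_⟩⟩
  · simpa [hq, hxn] using hx.sim_self hn le_rfl
  · rwa [seqAppend_of_le hn]
  · rwa [seqAppend_of_lt (by omega), Nat.add_sub_cancel_left]

theorem IsLinDecomp.append_tail (Hx : IsLinDecomp σ ρ n x p q) (Hy : IsLinDecomp σ ρ m y p' q')
    (hp'₂ : 1 < m → p' 2 = []) :
    ∃ P Q, IsLinDecomp σ ρ (n + m - 1) (seqAppend x (fun j => y (j + 1)) n) P Q := by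
  obtain ⟨hn, hx, hp, hq⟩ := isLinDecomp_iff.mp Hx
  obtain ⟨hm, hy, -, hq'⟩ := isLinDecomp_iff.mp Hy
  have ht : IsChain σ ρ (m - 1) (fun j => y (j + 1)) (fun j => p' (j + 1)) (fun j => q' (j + 1)) :=
    IsChain.shift (by rwa [Nat.sub_add_cancel hm])
  rw [Nat.add_sub_assoc hm]
  refine ⟨_, _, isLinDecomp_iff.mpr ⟨by omega, hx.append ht (fun _ _ => Or.inl hq)
    (fun _ hm' => hq ▸ ht.exists_sim_nil_append le_rfl hm')
    (fun _ hm' => hp'₂ (by omega) ▸ hx.exists_sim_append_nil hn le_rfl), ?_, ?_⟩⟩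
  · rwa [seqAppend_of_le hn]
  · rcases (m - 1).eq_zero_or_pos with hm₁ | hm₁
    · rwa [hm₁, Nat.add_zero, seqAppend_of_le le_rfl]
    · rwa [seqAppend_of_lt (by omega), Nat.add_sub_cancel_left, Nat.sub_add_cancel hm]

theorem IsLinDecomp.init_append (Hx : IsLinDecomp σ ρ n x p q) (Hy : IsLinDecomp σ ρ m y p' q')
    (hy1 : y 1 = x n) (hq'₁ : q' 1 = []) :
    ∃ P Q, IsLinDecomp σ ρ (n - 1 + m) (seqAppend x y (n - 1)) P Q := by
  obtain ⟨hn, hx, hp, hq⟩ := isLinDecomp_iff.mp Hx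
  obtain ⟨hm, hy, hp', hq'⟩ := isLinDecomp_iff.mp Hy
  have hx₁ := hx.mono (Nat.sub_le n 1)
  have hleft : 0 < n - 1 → ∃ w, Sim σ ρ (p' 1 ++ y 1 ++ q' 1) (q (n - 1) ++ w) := by
    intro hn₁
    rcases hx.seam (n - 1) hn₁ (by omega) with hq₁ | hpn
    · exact hq₁ ▸ hy.exists_sim_nil_append le_rfl hm
    · -- Both blocks at the junction are now the word `x n = y 1` itself.
      have := hx.sim_left n (by omega) le_rfl
      rw [Nat.sub_add_cancel hn] at hpn
      rw [hpn, hq, ← hy1] at this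
      simpa [hp', hq'₁] using this
  refine ⟨_, _, isLinDecomp_iff.mpr ⟨by omega, hx₁.append hy (fun _ _ => Or.inr hp')
    (fun hn₁ _ => hleft hn₁) (fun hn₁ _ => hp' ▸ hx₁.exists_sim_append_nil hn₁ le_rfl), ?_, ?_⟩⟩
  · rcases (n - 1).eq_zero_or_pos with hn₁ | hn₁
    · rwa [hn₁, seqAppend_of_lt one_pos]
    · rwa [seqAppend_of_le hn₁]
  · rwa [seqAppend_of_lt (by omega), Nat.add_sub_cancel_left]

theorem IsLinDecomp.glue_of_eq (Hx : IsLinDecomp σ ρ n x p q) (Hy : IsLinDecomp σ ρ m y p' q')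
    (hxn : x n = e) (hy1 : y 1 = e) :
    ∃ P Q, IsLinDecomp σ ρ (n + m - 1)
      (seqAppend (Function.update x n e) (fun j => y (j + 1)) n) P Q := by
  rw [← hxn, Function.update_eq_self]
  by_cases hp'₂ : 1 < m → p' 2 = []
  · exact Hx.append_tail Hy hp'₂
  obtain ⟨hm, hp'₂⟩ := Classical.not_imp.mp hp'₂
  have hq'₁ : q' 1 = [] := ((isLinDecomp_iff.mp Hy).2.1.seam 1 le_rfl hm).resolve_right hp'₂
  have hn : 1 ≤ n := Hx.1
  have hseq : seqAppend x (fun j => y (j + 1)) n = seqAppend x y (n - 1) := by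
    funext j
    rcases lt_trichotomy j n with hj | rfl | hj
    · rw [seqAppend_of_le hj.le, seqAppend_of_le (by omega)]
    · rw [seqAppend_of_le le_rfl, seqAppend_of_lt (by omega), Nat.sub_sub_self hn, hxn, hy1]
    · rw [seqAppend_of_lt hj, seqAppend_of_lt (by omega)]
      congr 1
      omega
  rw [hseq, Nat.sub_add_comm hn]
  exact Hx.init_append Hy (hy1.trans hxn.symm) hq'₁

theorem IsLinDecomp.glue_mem_linSet (Hx : IsLinDecomp σ ρ n x p q)
    (Hy : IsLinDecomp σ ρ m y p' q') (hxn : x n = x' ++ e) (hy1 : y 1 = e ++ y') :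
    wordSeg x 1 (n - 1) ++ x' ++ e ++ y' ++ wordSeg y 2 (m - 1) ∈
      LinSet σ ρ (n + m + min (x' ++ y').length 1 - 1) := by
  have hn : 1 ≤ n := Hx.1
  have hm : 1 ≤ m := Hy.1
  by_cases hx' : x' = []
  · by_cases hy' : y' = []
    · obtain ⟨P, Q, H⟩ := Hx.glue_of_eq (e := e) Hy (by simp [hxn, hx']) (by simp [hy1, hy'])
      refine ⟨_, H.1, by simp [hx', hy'], _, P, Q, H, ?_⟩
      rw [Nat.add_sub_assoc hm, wordSeg_seqAppend, wordSeg_update_last _ hn, wordSeg_shift]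
      simp [hx', hy']
    · obtain ⟨P, Q, H⟩ := Hx.glue_of_suffix_ne_nil Hy hxn hy1 hy'
      have := List.length_pos_iff.mpr hy'
      refine ⟨_, H.1, by simp only [List.length_append]; omega, _, P, Q, H, ?_⟩
      rw [wordSeg_seqAppend, wordSeg_update_one _ hm, wordSeg_eq_wordSeg_append hn, hxn]
      simp
  · obtain ⟨P, Q, H⟩ := Hx.glue_of_prefix_ne_nil Hy hxn hy1 hx'
    have := List.length_pos_iff.mpr hx'
    refine ⟨_, H.1, by simp only [List.length_append]; omega, _, P, Q, H, ?_⟩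
    rw [wordSeg_seqAppend, wordSeg_update_last _ hn, wordSeg_eq_append_wordSeg hm, hy1]
    simp

end Chain

theorem linDecomp_glue_general {A : Type*}
    (σ ρ : List A → List A → Prop)
    (n m : ℕ) (x y : ℕ → List A)
    (hx : ∃ p q : ℕ → List A, IsLinDecomp σ ρ n x p q)
    (hy : ∃ p q : ℕ → List A, IsLinDecomp σ ρ m y p q)
    (e x' y' : List A) (hxn : x n = x' ++ e) (hy1 : y 1 = e ++ y') :
    (wordSeg x 1 (n-1) ++ x' ++ e ++ y' ++ wordSeg y 2 (m-1)) ∈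
      LinSet σ ρ (n + m + min (x' ++ y').length 1 - 1) ∧
    (x' ≠ [] → ∃ p q : ℕ → List A, IsLinDecomp σ ρ (n + m)
        (fun j => if j < n then x j else if j = n then x' else y (j - n)) p q) ∧
    (y' ≠ [] → ∃ p q : ℕ → List A, IsLinDecomp σ ρ (n + m)
        (fun j => if j ≤ n then x j else if j = n + 1 then y' else y (j - n)) p q) ∧
    (x' = [] → y' = [] → ∃ p q : ℕ → List A, IsLinDecomp σ ρ (n + m - 1)
        (fun j => if j < n then x j else if j = n then e else y (j - n + 1)) p q) := by
  obtain ⟨p, q, Hx⟩ := hx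
  obtain ⟨p', q', Hy⟩ := hy
  refine ⟨Hx.glue_mem_linSet Hy hxn hy1, fun hx' => ?_, fun hy' => ?_, fun hx' hy' => ?_⟩
  · simpa only [seqAppend_update_eq_ite] using Hx.glue_of_prefix_ne_nil Hy hxn hy1 hx'
  · simpa only [seqAppend_update_one_eq_ite] using Hx.glue_of_suffix_ne_nil Hy hxn hy1 hy'
  · simpa only [seqAppend_update_eq_ite] using
      Hx.glue_of_eq (e := e) Hy (by simp [hxn, hx']) (by simp [hy1, hy'])

/-- Lemma 2.4: gluing two linear decompositions along a common word
`e` with `x_n = x'·e` and `y_1 = e·y'`. -/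
theorem linDecomp_glue {A : Type*} {nu nv : ℕ}
    (u : Fin nu → List A) (v : Fin nv → List A)
    (hu : Function.Injective u) (hv : Function.Injective v)
    (σ ρ : List A → List A → Prop) (hσ : σ = FamilyRel u) (hρ : ρ = FamilyRel v)
    (hset : SettingHyps σ ρ)
    (n m : ℕ) (x y : ℕ → List A)
    (hx : ∃ p q : ℕ → List A, IsLinDecomp σ ρ n x p q)
    (hy : ∃ p q : ℕ → List A, IsLinDecomp σ ρ m y p q)
    (e x' y' : List A) (hxn : x n = x' ++ e) (hy1 : y 1 = e ++ y') :
    (wordSeg x 1 (n-1) ++ x' ++ e ++ y' ++ wordSeg y 2 (m-1)) ∈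
      LinSet σ ρ (n + m + min (x' ++ y').length 1 - 1) ∧
    (x' ≠ [] → ∃ p q : ℕ → List A, IsLinDecomp σ ρ (n + m)
        (fun j => if j < n then x j else if j = n then x' else y (j - n)) p q) ∧
    (y' ≠ [] → ∃ p q : ℕ → List A, IsLinDecomp σ ρ (n + m)
        (fun j => if j ≤ n then x j else if j = n + 1 then y' else y (j - n)) p q) ∧
    (x' = [] → y' = [] → ∃ p q : ℕ → List A, IsLinDecomp σ ρ (n + m - 1)
        (fun j => if j < n then x j else if j = n then e else y (j - n + 1)) p q) :=
  linDecomp_glue_general σ ρ n m x y hx hy e x' y' hxn hy1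

end SqFreePaper
end
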